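/- arXiv:2410.04897 — 2 statements merged into one kernel-verified Lean document; each statement's English description precedes it below -/
import Mathlib

section
/- Let T = (V, A) be a tournament on n vertices and let F ⊆ V be a feedback vertex set of T with |F| = f. Then the number of distinct sets of the form N⁺(R), over all subsets R ⊆ V, is at most 4^f · (n − f + 1). -/
open scoped Classical

/-- The out-neighborhood of a set `S` in the digraph with arc relation `A`. -/
noncomputable def Nplus {V : Type} [Fintype V] (A : V → V → Prop) (S : Finset V) : Finset V :=
  Finset.univ.filter (fun y => ∃ x ∈ S, A x y)

/-- The subdigraph induced by `S` is acyclic (loops count as cycles). -/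
def AcyclicOn {V : Type} (A : V → V → Prop) (S : Finset V) : Prop :=
  ∀ v ∈ S, ¬ Relation.TransGen (fun x y => x ∈ S ∧ y ∈ S ∧ A x y) v v

/-- A tournament: a loopless digraph with exactly one arc between every pair of
distinct vertices. -/
def IsTournament {V : Type} (A : V → V → Prop) : Prop :=
  (∀ v, ¬ A v v) ∧ ∀ u v : V, u ≠ v → (A u v ↔ ¬ A v u)

/-!
Split both `R` and `N⁺(R)` along `F`. The traces `R ∩ F` and `N⁺(R) ∩ F` leave `2^f · 2^f`
choices, and they determine `N⁺(R ∩ F) \ F`. Off `F` the tournament is acyclic, hence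
transitive, so the sets `N⁺(S) \ F` with `S` disjoint from `F` form a chain; a member of a
chain of subsets of `V \ F` is determined by its size, one of the `n - f + 1` values `0, …, n - f`.
-/

open Finset Function

theorem Function.FactorsThrough.card_image_le {α β γ : Type*} [DecidableEq β] [DecidableEq γ]
    {f : α → β} {g : α → γ} (h : f.FactorsThrough g) (s : Finset α) :
    #(s.image f) ≤ #(s.image g) := by
  rcases isEmpty_or_nonempty α with _ | ⟨⟨a⟩⟩
  · simp [s.eq_empty_of_isEmpty]
  · calc #(s.image f) = #((s.image g).image (extend g f fun _ => f a)) := by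
          rw [image_image]
          congr 2
          exact (funext (h.extend_apply _)).symm
      _ ≤ #(s.image g) := Finset.card_image_le

theorem IsTournament.trans_of_acyclicOn {V : Type} {A : V → V → Prop} (hT : IsTournament A)
    {S : Finset V} (hS : AcyclicOn A S) {a b c : V} (ha : a ∈ S) (hb : b ∈ S) (hc : c ∈ S)
    (hab : A a b) (hbc : A b c) : A a c := by
  have hab' : Relation.TransGen (fun x y => x ∈ S ∧ y ∈ S ∧ A x y) a b := .single ⟨ha, hb, hab⟩
  by_cases hac : a = c
  · subst hac
    exact absurd (hab'.tail ⟨hb, ha, hbc⟩) (hS a ha)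
  · by_contra hn
    have hca : A c a := (hT.2 c a (Ne.symm hac)).2 hn
    exact hS a ha ((hab'.tail ⟨hb, hc, hbc⟩).tail ⟨hc, ha, hca⟩)

section Nplus

variable {V : Type} [Fintype V] {A : V → V → Prop}

theorem mem_Nplus {S : Finset V} {y : V} : y ∈ Nplus A S ↔ ∃ x ∈ S, A x y := by
  simp [Nplus]

variable [DecidableEq V]

theorem Nplus_union (S T : Finset V) : Nplus A (S ∪ T) = Nplus A S ∪ Nplus A T := by
  ext y
  simp only [mem_Nplus, mem_union, or_and_right, exists_or]

theorem Nplus_eq_inter_union_sdiff (R F : Finset V) :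
    Nplus A R = Nplus A R ∩ F ∪ (Nplus A (R ∩ F) \ F ∪ Nplus A (R \ F) \ F) := by
  rw [← union_sdiff_distrib, ← Nplus_union, ← inf_eq_inter, ← inf_eq_inter, ← sup_eq_union,
    ← sup_eq_union, sup_inf_sdiff, sup_inf_sdiff]

theorem Nplus_sdiff_subset_or_subset (hT : IsTournament A) {F : Finset V} (hF : AcyclicOn A (univ \ F))
    {S S' : Finset V} (hS : Disjoint S F) (hS' : Disjoint S' F) :
    Nplus A S \ F ⊆ Nplus A S' \ F ∨ Nplus A S' \ F ⊆ Nplus A S \ F := by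
  have outside {v : V} (hv : v ∉ F) : v ∈ univ \ F := mem_sdiff.2 ⟨mem_univ v, hv⟩
  refine or_iff_not_imp_left.2 fun hnot => ?_
  obtain ⟨y, hy, hy'⟩ := not_subset.1 hnot
  obtain ⟨hyN, hyF⟩ := mem_sdiff.1 hy
  obtain ⟨x, hxS, hxy⟩ := mem_Nplus.1 hyN
  have hxF : x ∉ F := disjoint_left.1 hS hxS
  intro z hz
  obtain ⟨hzN, hzF⟩ := mem_sdiff.1 hz
  obtain ⟨x', hx'S, hx'z⟩ := mem_Nplus.1 hzN
  have hx'F : x' ∉ F := disjoint_left.1 hS' hx'S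
  -- `y ∉ N⁺(S')`, so every `x' ∈ S'` other than `y` is an out-neighbour of `y`.
  have hxx' : A x x' := by
    by_cases hx'y : x' = y
    · exact hx'y ▸ hxy
    · have hyx' : A y x' := (hT.2 y x' (Ne.symm hx'y)).2 fun h =>
        hy' (mem_sdiff.2 ⟨mem_Nplus.2 ⟨x', hx'S, h⟩, hyF⟩)
      exact hT.trans_of_acyclicOn hF (outside hxF) (outside hyF) (outside hx'F) hxy hyx'
  exact mem_sdiff.2 ⟨mem_Nplus.2 ⟨x, hxS, hT.trans_of_acyclicOn hF (outside hxF)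
    (outside hx'F) (outside hzF) hxx' hx'z⟩, hzF⟩

theorem Nplus_sdiff_eq_of_card_eq (hT : IsTournament A) {F : Finset V}
    (hF : AcyclicOn A (univ \ F)) {S S' : Finset V} (hS : Disjoint S F) (hS' : Disjoint S' F)
    (h : #(Nplus A S \ F) = #(Nplus A S' \ F)) : Nplus A S \ F = Nplus A S' \ F := by
  rcases Nplus_sdiff_subset_or_subset hT hF hS hS' with hsub | hsub
  · exact eq_of_subset_of_card_le hsub h.ge
  · exact (eq_of_subset_of_card_le hsub h.le).symm

end Nplus

/-- For a tournament `T` on `n` vertices with a feedback vertex set `F` of size `f`,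
the number of distinct sets of the form `N⁺(R)`, over the subsets `R` of the vertex
set, is at most `4^f · (n - f + 1)`. -/
theorem tournament_card_image_Nplus_le {V : Type} [Fintype V] [DecidableEq V]
    (A : V → V → Prop) (hT : IsTournament A)
    (F : Finset V) (hF : AcyclicOn A (Finset.univ \ F)) :
    ((Finset.univ : Finset (Finset V)).image (fun R => Nplus A R)).card ≤
      4 ^ F.card * (Fintype.card V - F.card + 1) := by
  let sig (R : Finset V) : Finset V × Finset V × ℕ :=
    (R ∩ F, Nplus A R ∩ F, #(Nplus A (R \ F) \ F))
  have hfactor : (Nplus A).FactorsThrough sig := fun R R' h => by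
    obtain ⟨hRF, hrest⟩ := Prod.mk.inj h
    obtain ⟨hNF, hcard⟩ := Prod.mk.inj hrest
    rw [Nplus_eq_inter_union_sdiff R F, Nplus_eq_inter_union_sdiff R' F, hRF, hNF,
      Nplus_sdiff_eq_of_card_eq hT hF sdiff_disjoint sdiff_disjoint hcard]
  have hsig (R : Finset V) :
      sig R ∈ F.powerset ×ˢ F.powerset ×ˢ range (Fintype.card V - #F + 1) := by
    have hsize : #(Nplus A (R \ F) \ F) ≤ Fintype.card V - #F := by
      rw [← card_compl, sdiff_eq_inter_compl]
      exact card_le_card inter_subset_right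
    simp only [sig, mem_product, mem_powerset, mem_range, inter_subset_right, true_and]
    omega
  calc #(univ.image (Nplus A))
      ≤ #(univ.image sig) := hfactor.card_image_le univ
    _ ≤ #(F.powerset ×ˢ F.powerset ×ˢ range (Fintype.card V - #F + 1)) :=
        card_le_card (image_subset_iff.2 fun R _ => hsig R)
    _ = 4 ^ #F * (Fintype.card V - #F + 1) := by
        rw [card_product, card_product, card_powerset, card_range, ← mul_assoc, ← mul_pow]
        norm_num
end

section
/- For any finite digraph D, ct(D) = ct(D⃖), where D⃖ is the reverse digraph of D obtained by reversing the direction of every arc. -/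
open scoped Classical

/-- The robber territories associated with a cop strategy `W` (0-indexed:
`terr A W i` is the paper's `R_{i+1}`). -/
noncomputable def terr {V : Type} [Fintype V] [DecidableEq V]
    (A : V → V → Prop) (W : ℕ → Finset V) : ℕ → Finset V
  | 0 => Finset.univ \ W 0
  | i + 1 => Nplus A (terr A W i) \ W (i + 1)

/-- A cop strategy uses at most `k` cops. -/
def UsesAtMost {V : Type} (W : ℕ → Finset V) (k : ℕ) : Prop :=
  ∀ i, (W i).card ≤ k

/-- The cop number: the least `k` admitting a winning strategy using `k` cops. -/
noncomputable def copNumber {V : Type} [Fintype V] [DecidableEq V] (A : V → V → Prop) : ℕ :=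
  sInf {k | ∃ W : ℕ → Finset V, UsesAtMost W k ∧ ∃ t, terr A W t = ∅}

/-- The capture time `ct(D)`: the minimum (1-indexed) capture time over winning
strategies using `cn(D)` cops. -/
noncomputable def captureTime {V : Type} [Fintype V] [DecidableEq V] (A : V → V → Prop) : ℕ :=
  sInf {t | ∃ W : ℕ → Finset V, UsesAtMost W (copNumber A) ∧ terr A W t = ∅} + 1

lemma mem_terr_iff {V : Type} [Fintype V] [DecidableEq V] (A : V → V → Prop)
    (W : ℕ → Finset V) :
    ∀ n v, v ∈ terr A W n ↔
      ∃ f : ℕ → V, f n = v ∧ (∀ i < n, A (f i) (f (i+1))) ∧ ∀ i ≤ n, f i ∉ W i := by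
  intro n
  induction n with
  | zero =>
    intro v
    simp only [terr, Finset.mem_sdiff, Finset.mem_univ, true_and]
    constructor
    · intro h
      refine ⟨fun _ => v, rfl, by omega, fun i hi => ?_⟩
      interval_cases i
      exact h
    · rintro ⟨f, hf, -, hW⟩
      rw [← hf]; exact hW 0 le_rfl
  | succ n ih =>
    intro v
    simp only [terr, Nplus, Finset.mem_sdiff, Finset.mem_filter, Finset.mem_univ, true_and]
    constructor
    · rintro ⟨⟨x, hx, hA⟩, hv⟩
      obtain ⟨f, hfn, hfa, hfW⟩ := (ih x).1 hx
      refine ⟨fun i => if i ≤ n then f i else v, by simp, ?_, ?_⟩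
      · intro i hi
        dsimp only
        rcases lt_or_eq_of_le (Nat.lt_succ_iff.1 hi) with h | h
        · rw [if_pos (Nat.le_of_lt h), if_pos (Nat.succ_le_of_lt h)]
          exact hfa i h
        · subst h
          rw [if_pos le_rfl, if_neg (by omega), hfn]
          exact hA
      · intro i hi
        dsimp only
        rcases lt_or_eq_of_le hi with h | h
        · rw [if_pos (Nat.lt_succ_iff.1 h)]
          exact hfW i (Nat.lt_succ_iff.1 h)
        · subst h; rw [if_neg (by omega)]; exact hv
    · rintro ⟨f, hfn, hfa, hfW⟩
      refine ⟨⟨f n, (ih (f n)).2 ⟨f, rfl, fun i hi => hfa i (by omega),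
        fun i hi => hfW i (by omega)⟩, hfn ▸ hfa n (by omega)⟩, hfn ▸ hfW (n+1) le_rfl⟩

lemma terr_empty_iff {V : Type} [Fintype V] [DecidableEq V] (A : V → V → Prop)
    (W : ℕ → Finset V) (t : ℕ) :
    terr A W t = ∅ ↔ ∀ f : ℕ → V, (∀ i < t, A (f i) (f (i+1))) → ∃ i ≤ t, f i ∈ W i := by
  constructor
  · intro h f hf
    by_contra hc
    push_neg at hc
    have : f t ∈ terr A W t := (mem_terr_iff A W t (f t)).2 ⟨f, rfl, hf, hc⟩
    simp [h] at this
  · intro h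
    rw [Finset.eq_empty_iff_forall_notMem]
    intro v hv
    obtain ⟨f, -, hfa, hfW⟩ := (mem_terr_iff A W t v).1 hv
    obtain ⟨i, hi, hmem⟩ := h f hfa
    exact hfW i hi hmem

lemma win_reverse {V : Type} [Fintype V] [DecidableEq V] (A : V → V → Prop)
    {W : ℕ → Finset V} {k t : ℕ} (hk : UsesAtMost W k) (ht : terr A W t = ∅) :
    ∃ W' : ℕ → Finset V, UsesAtMost W' k ∧ terr (fun u w => A w u) W' t = ∅ := by
  refine ⟨fun i => if i ≤ t then W (t - i) else ∅, fun i => ?_, ?_⟩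
  · by_cases h : i ≤ t
    · simpa [h] using hk (t - i)
    · simp [h]
  · rw [terr_empty_iff]
    intro f hf
    have := (terr_empty_iff A W t).1 ht (fun i => f (t - i)) ?_
    · obtain ⟨i, hi, hmem⟩ := this
      exact ⟨t - i, by omega, by rw [if_pos (by omega), Nat.sub_sub_self hi]; exact hmem⟩
    · intro i hi
      have := hf (t - i - 1) (by omega)
      have e1 : t - i - 1 + 1 = t - i := by omega
      rw [e1] at this
      show A (f (t - i)) (f (t - (i + 1)))
      have e2 : t - (i + 1) = t - i - 1 := by omega
      rw [e2]
      exact this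

lemma winset_reverse {V : Type} [Fintype V] [DecidableEq V] (A : V → V → Prop) (k t : ℕ) :
    (∃ W : ℕ → Finset V, UsesAtMost W k ∧ terr A W t = ∅) ↔
    (∃ W : ℕ → Finset V, UsesAtMost W k ∧ terr (fun u w => A w u) W t = ∅) := by
  constructor
  · rintro ⟨W, hk, ht⟩; exact win_reverse A hk ht
  · rintro ⟨W, hk, ht⟩; exact win_reverse (fun u w => A w u) hk ht

lemma copNumber_reverse {V : Type} [Fintype V] [DecidableEq V] (A : V → V → Prop) :
    copNumber A = copNumber (fun u w => A w u) := by
  unfold copNumber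
  congr 1
  ext k
  simp only [Set.mem_setOf_eq]
  constructor
  · rintro ⟨W, hk, t, ht⟩
    obtain ⟨W', h1, h2⟩ := win_reverse A hk ht
    exact ⟨W', h1, t, h2⟩
  · rintro ⟨W, hk, t, ht⟩
    obtain ⟨W', h1, h2⟩ := win_reverse (fun u w => A w u) hk ht
    exact ⟨W', h1, t, h2⟩

/-- A digraph and its reverse digraph have the same capture time. -/
theorem captureTime_reverse {V : Type} [Fintype V] [DecidableEq V] (A : V → V → Prop) :
    captureTime A = captureTime (fun u w => A w u) := by
  unfold captureTime
  congr 1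
  rw [copNumber_reverse]
  congr 1
  ext t
  simp only [Set.mem_setOf_eq]
  exact winset_reverse A (copNumber fun u w => A w u) t
end
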